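/- Let C ≥ 1, T > 0, and let (γ^(k))_{k≥1} and (γ̃^(k))_{k≥1} be two families of continuous functions γ^(k), γ̃^(k) : [0,T]×[0,1]^k → ℝ, each satisfying the limiting BBGKY hierarchy on [0,T], such that γ^(k)(0,·) = γ̃^(k)(0,·) for every k and sup_{t∈[0,T], x⃗∈[0,1]^k} |γ^(k)(t,x⃗)| ≤ C^k and sup_{t∈[0,T], x⃗∈[0,1]^k} |γ̃^(k)(t,x⃗)| ≤ C^k for every k ≥ 1. Then for every k ≥ 1, every M ≥ 1 and every t ∈ [0,T], sup_{x⃗∈[0,1]^k} |γ^(k)(t,x⃗) − γ̃^(k)(t,x⃗)| ≤ 2 C^{k+M} ( k(k+1)⋯(k+M−1) / M! ) t^M. -/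

import Mathlib

open MeasureTheory Real

/-- Centered Gaussian density with variance `t`. -/
noncomputable def gaussD (t x : ℝ) : ℝ :=
  (2 * Real.pi * t) ^ (-(1:ℝ)/2) * Real.exp (-x ^ 2 / (2 * t))

/-- The Neumann heat kernel on `[0,1]` (transition density of reflected BM). -/
noncomputable def heatK (t x y : ℝ) : ℝ :=
  ∑' n : ℤ, (gaussD t (x - y + 2 * (n : ℝ)) + gaussD t (x + y + 2 * (n : ℝ)))

/-- The unit box `[0,1]^k`. -/
def unitBox (k : ℕ) : Set (Fin k → ℝ) := Set.univ.pi fun _ => Set.Icc (0:ℝ) 1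

/-- The `k`-fold Neumann heat semigroup:
`P^(k)_t Φ(x) = ∫_{[0,1]^k} Φ(y) ∏ᵢ p(t,xᵢ,yᵢ) dy` for `t > 0`, and `P^(k)_0 Φ = Φ`. -/
noncomputable def Ptk (k : ℕ) (t : ℝ) (Φ : (Fin k → ℝ) → ℝ) (x : Fin k → ℝ) : ℝ :=
  if t = 0 then Φ x else ∫ y in unitBox k, Φ y * ∏ i, heatK t (x i) (y i)

/-- A family `(γ^(k))_{k≥1}` of continuous functions on `[0,T]×[0,1]^k` satisfies the
limiting BBGKY hierarchy on `[0,T]` if for every `k ≥ 1`, `t ∈ [0,T]`, `x⃗ ∈ [0,1]^k`,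
`γ^(k)(t,x⃗) = P^(k)_t γ^(k)(0,·)(x⃗)
  − Σᵢ ∫₀ᵗ P^(k)_{t−s}( z⃗ ↦ γ^(k+1)(s,(z₁,…,z_k,zᵢ)) )(x⃗) ds`. -/
def SatisfiesLimitingHierarchy (T : ℝ) (γ : (k : ℕ) → ℝ → (Fin k → ℝ) → ℝ) : Prop :=
  (∀ k : ℕ, 1 ≤ k →
    ContinuousOn (fun q : ℝ × (Fin k → ℝ) => γ k q.1 q.2)
      (Set.Icc (0:ℝ) T ×ˢ unitBox k)) ∧
  ∀ k : ℕ, 1 ≤ k → ∀ t ∈ Set.Icc (0:ℝ) T, ∀ x ∈ unitBox k,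
    γ k t x = Ptk k t (γ k 0) x
      - ∑ i : Fin k, ∫ s in (0:ℝ)..t,
          Ptk k (t - s) (fun z => γ (k+1) s (Fin.snoc z (z i))) x

/-! For `t > 0` the Neumann kernel is nonnegative and `∫₀¹ p(t,x,y) dy = 1`: the images
`x - y + 2n`, `x + y + 2n` of `y ∈ [0,1]` tile `ℝ` by the intervals `(x + 2n - 1, x + 2n + 1]`,
so the series integrates to the total mass of the Gaussian. Hence every `P^(k)_t` is a contraction
for the sup norm on `[0,1]^k`. Subtracting the two hierarchies, the free terms cancel and the
difference at level `k` and time `t` is at most `k ∫₀ᵗ` of the difference at level `k + 1`.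
Iterating this `M` times, starting from the trivial bound `2 C^{k+M}` at level `k + M`, produces
the coefficient `k(k+1)⋯(k+M-1) t^M / M!`. -/

open Filter Set

/- Up to the factor `(2πt)^{-1/2} e^{-a²/(2t)}`, the terms are the norms of the Jacobi theta terms
with `τ = 2i/(πt)` and `z = ia/(πt)`. -/
lemma summable_gaussD_add_two_mul {t : ℝ} (ht : 0 < t) (a : ℝ) :
    Summable fun n : ℤ => gaussD t (a + 2 * n) := by
  have him : ∀ r : ℝ, (Complex.I * r).im = r := by simp
  have hτ : 0 < (Complex.I * (2 / (π * t) : ℝ)).im := by rw [him]; positivity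
  refine (((summable_jacobiTheta₂_term_iff (Complex.I * (a / (π * t) : ℝ)) _).2 hτ).norm.mul_left
    ((2 * π * t) ^ (-(1:ℝ)/2) * Real.exp (-a ^ 2 / (2 * t)))).congr fun n => ?_
  rw [norm_jacobiTheta₂_term, mul_assoc, gaussD, ← Real.exp_add, him, him]
  congr 2
  field_simp
  ring

lemma gaussD_nonneg {t : ℝ} (ht : 0 ≤ t) (x : ℝ) : 0 ≤ gaussD t x := by
  unfold gaussD; positivity

lemma measurable_gaussD : Measurable fun p : ℝ × ℝ => gaussD p.1 p.2 := by
  unfold gaussD; fun_prop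

lemma continuous_gaussD (t : ℝ) : Continuous (gaussD t) := by
  unfold gaussD; fun_prop

lemma gaussD_eq_mul_exp_neg_mul_sq (t x : ℝ) :
    gaussD t x = (2 * π * t) ^ (-(1:ℝ)/2) * Real.exp (-(1 / (2 * t)) * x ^ 2) := by
  rw [gaussD]; ring_nf

lemma integrable_gaussD {t : ℝ} (ht : 0 < t) : Integrable (gaussD t) := by
  simp_rw [funext (gaussD_eq_mul_exp_neg_mul_sq t)]
  exact (integrable_exp_neg_mul_sq (by positivity)).const_mul _

lemma integral_gaussD {t : ℝ} (ht : 0 < t) : ∫ x, gaussD t x = 1 := by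
  have h2πt : 0 < 2 * π * t := by positivity
  simp_rw [gaussD_eq_mul_exp_neg_mul_sq, integral_const_mul, integral_gaussian,
    show π / (1 / (2 * t)) = 2 * π * t by field_simp, Real.sqrt_eq_rpow,
    ← Real.rpow_add h2πt]
  norm_num

lemma summable_heatK_terms {t : ℝ} (ht : 0 < t) (x y : ℝ) :
    Summable fun n : ℤ => gaussD t (x - y + 2 * (n : ℝ)) + gaussD t (x + y + 2 * (n : ℝ)) :=
  (summable_gaussD_add_two_mul ht _).add (summable_gaussD_add_two_mul ht _)

lemma heatK_nonneg {t : ℝ} (ht : 0 ≤ t) (x y : ℝ) : 0 ≤ heatK t x y :=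
  tsum_nonneg fun _ => add_nonneg (gaussD_nonneg ht _) (gaussD_nonneg ht _)

lemma aestronglyMeasurable_heatK {α : Type*} [MeasurableSpace α] {μ : Measure α}
    {τ u v : α → ℝ} (hτ : Measurable τ) (hu : Measurable u) (hv : Measurable v)
    (hpos : ∀ᵐ a ∂μ, 0 < τ a) :
    AEStronglyMeasurable (fun a => heatK (τ a) (u a) (v a)) μ := by
  have hterm (w : α → ℝ) (hw : Measurable w) (n : ℤ) :
      Measurable fun a => gaussD (τ a) (w a + 2 * (n : ℝ)) :=
    measurable_gaussD.comp (hτ.prodMk (hw.add_const _))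
  exact aestronglyMeasurable_of_tendsto_ae atTop
    (fun s : Finset ℤ => (Finset.measurable_sum s fun n _ =>
      (hterm _ (hu.sub hv) n).add (hterm _ (hu.add hv) n)).aestronglyMeasurable)
    (hpos.mono fun a ha => (summable_heatK_terms ha _ _).hasSum)

lemma integral_comp_sub_add_comp_add {g : ℝ → ℝ} (hg : Integrable g) (c : ℝ) :
    ∫ y in (0:ℝ)..1, (g (c - y) + g (c + y)) = ∫ u in (c - 1)..(c + 1), g u := by
  rw [intervalIntegral.integral_add (hg.comp_sub_left c).intervalIntegrable
      (hg.comp_add_left c).intervalIntegrable,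
    intervalIntegral.integral_comp_sub_left, intervalIntegral.integral_comp_add_left,
    sub_zero, add_zero,
    intervalIntegral.integral_add_adjacent_intervals hg.intervalIntegrable hg.intervalIntegrable]

lemma hasSum_integral_heatK_terms {t : ℝ} (ht : 0 < t) (x : ℝ) :
    HasSum (fun n : ℤ => ∫ y in Icc (0:ℝ) 1,
      (gaussD t (x - y + 2 * (n : ℝ)) + gaussD t (x + y + 2 * (n : ℝ)))) 1 := by
  have hg := integrable_gaussD ht
  have hpiece (n : ℤ) : ∫ y in Icc (0:ℝ) 1,
      (gaussD t (x - y + 2 * (n : ℝ)) + gaussD t (x + y + 2 * (n : ℝ)))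
      = ∫ u in Ioc (x - 1 + n • (2:ℝ)) (x - 1 + (n + 1) • (2:ℝ)), gaussD t u := by
    have hlo : x - 1 + n • (2:ℝ) = x + 2 * n - 1 := by rw [zsmul_eq_mul]; ring
    have hhi : x - 1 + (n + 1) • (2:ℝ) = x + 2 * n + 1 := by rw [zsmul_eq_mul]; push_cast; ring
    rw [hlo, hhi, integral_Icc_eq_integral_Ioc, ← intervalIntegral.integral_of_le zero_le_one,
      ← intervalIntegral.integral_of_le (by linarith), ← integral_comp_sub_add_comp_add hg]
    congr 1 with y
    ring_nf
  simp_rw [hpiece]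
  have h := hasSum_integral_iUnion (fun _ => measurableSet_Ioc)
    (pairwise_disjoint_Ioc_add_zsmul (x - 1) (2:ℝ)) hg.integrableOn
  rwa [iUnion_Ioc_add_zsmul two_pos, setIntegral_univ, integral_gaussD ht] at h

lemma integral_heatK {t : ℝ} (ht : 0 < t) (x : ℝ) : ∫ y in Icc (0:ℝ) 1, heatK t x y = 1 := by
  have hs := hasSum_integral_heatK_terms ht x
  have hnonneg (n : ℤ) (y : ℝ) :
      0 ≤ gaussD t (x - y + 2 * (n : ℝ)) + gaussD t (x + y + 2 * (n : ℝ)) :=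
    add_nonneg (gaussD_nonneg ht.le _) (gaussD_nonneg ht.le _)
  refine ((hasSum_integral_of_summable_integral_norm (fun n => ?_) ?_).unique hs)
  · exact Continuous.integrableOn_Icc (by have := continuous_gaussD t; fun_prop)
  · simpa only [Real.norm_of_nonneg (hnonneg _ _)] using hs.summable

lemma integrableOn_heatK {t : ℝ} (ht : 0 < t) (x : ℝ) : IntegrableOn (heatK t x) (Icc 0 1) :=
  Integrable.of_integral_ne_zero (by rw [integral_heatK ht]; exact one_ne_zero)

lemma measurableSet_unitBox (k : ℕ) : MeasurableSet (unitBox k) :=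
  MeasurableSet.univ_pi fun _ => measurableSet_Icc

lemma isCompact_unitBox (k : ℕ) : IsCompact (unitBox k) :=
  isCompact_univ_pi fun _ => isCompact_Icc

lemma volume_restrict_unitBox (k : ℕ) :
    volume.restrict (unitBox k) = Measure.pi fun _ : Fin k => volume.restrict (Icc (0:ℝ) 1) := by
  rw [unitBox, volume_pi, Measure.restrict_pi_pi]

lemma integrableOn_prod_heatK {k : ℕ} {t : ℝ} (ht : 0 < t) (x : Fin k → ℝ) :
    IntegrableOn (fun y : Fin k → ℝ => ∏ i, heatK t (x i) (y i)) (unitBox k) := by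
  rw [IntegrableOn, volume_restrict_unitBox]
  exact Integrable.fintype_prod fun i => integrableOn_heatK ht (x i)

lemma integral_prod_heatK {k : ℕ} {t : ℝ} (ht : 0 < t) (x : Fin k → ℝ) :
    ∫ y in unitBox k, ∏ i, heatK t (x i) (y i) = 1 := by
  rw [volume_restrict_unitBox, integral_fintype_prod_eq_prod (fun i y => heatK t (x i) y)]
  simp [integral_heatK ht]

lemma integrableOn_mul_prod_heatK {k : ℕ} {t : ℝ} (ht : 0 < t) {Φ : (Fin k → ℝ) → ℝ}
    (hΦ : ContinuousOn Φ (unitBox k)) (x : Fin k → ℝ) :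
    IntegrableOn (fun y => Φ y * ∏ i, heatK t (x i) (y i)) (unitBox k) := by
  obtain ⟨B, hB⟩ := (isCompact_unitBox k).exists_bound_of_continuousOn hΦ
  exact (integrableOn_prod_heatK ht x).bdd_mul
    (hΦ.aestronglyMeasurable (measurableSet_unitBox k))
    (ae_restrict_of_forall_mem (measurableSet_unitBox k) hB)

lemma abs_Ptk_le {k : ℕ} {t B : ℝ} (ht : 0 ≤ t) {Φ : (Fin k → ℝ) → ℝ}
    (hΦ : ∀ y ∈ unitBox k, |Φ y| ≤ B) {x : Fin k → ℝ} (hx : x ∈ unitBox k) :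
    |Ptk k t Φ x| ≤ B := by
  rw [Ptk]
  split_ifs with h0
  · exact hΦ x hx
  have ht : 0 < t := lt_of_le_of_ne ht (Ne.symm h0)
  have hK (y : Fin k → ℝ) : 0 ≤ ∏ i, heatK t (x i) (y i) :=
    Finset.prod_nonneg fun _ _ => heatK_nonneg ht.le _ _
  calc |∫ y in unitBox k, Φ y * ∏ i, heatK t (x i) (y i)|
      ≤ ∫ y in unitBox k, |Φ y * ∏ i, heatK t (x i) (y i)| := abs_integral_le_integral_abs
    _ ≤ ∫ y in unitBox k, B * ∏ i, heatK t (x i) (y i) := by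
      refine integral_mono_of_nonneg (ae_of_all _ fun _ => abs_nonneg _)
        ((integrableOn_prod_heatK ht x).const_mul B)
        (ae_restrict_of_forall_mem (measurableSet_unitBox k) fun y hy => ?_)
      dsimp only
      rw [abs_mul, abs_of_nonneg (hK y)]
      exact mul_le_mul_of_nonneg_right (hΦ y hy) (hK y)
    _ = B := by rw [integral_const_mul, integral_prod_heatK ht, mul_one]

lemma Ptk_sub {k : ℕ} {t : ℝ} (ht : 0 ≤ t) {Φ Ψ : (Fin k → ℝ) → ℝ}
    (hΦ : ContinuousOn Φ (unitBox k)) (hΨ : ContinuousOn Ψ (unitBox k)) (x : Fin k → ℝ) :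
    Ptk k t Φ x - Ptk k t Ψ x = Ptk k t (Φ - Ψ) x := by
  unfold Ptk
  split_ifs with h0
  · rfl
  have ht : 0 < t := lt_of_le_of_ne ht (Ne.symm h0)
  rw [← integral_sub (integrableOn_mul_prod_heatK ht hΦ x) (integrableOn_mul_prod_heatK ht hΨ x)]
  simp_rw [Pi.sub_apply, sub_mul]

lemma intervalIntegrable_Ptk {k : ℕ} {T t : ℝ} {Φ : ℝ → (Fin k → ℝ) → ℝ}
    (hΦ : ContinuousOn (fun q : ℝ × (Fin k → ℝ) => Φ q.1 q.2) (Icc 0 T ×ˢ unitBox k))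
    (ht : 0 ≤ t) (htT : t ≤ T) {x : Fin k → ℝ} (hx : x ∈ unitBox k) :
    IntervalIntegrable (fun s => Ptk k (t - s) (Φ s) x) volume 0 t := by
  obtain ⟨B, hB⟩ := (isCompact_Icc.prod (isCompact_unitBox k)).exists_bound_of_continuousOn hΦ
  have hbound (s : ℝ) (hs : s ∈ Ioo 0 t) : ‖Ptk k (t - s) (Φ s) x‖ ≤ B :=
    abs_Ptk_le (sub_nonneg.2 hs.2.le)
      (fun y hy => hB (s, y) ⟨⟨hs.1.le, hs.2.le.trans htT⟩, hy⟩) hx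
  have hset : MeasurableSet (Ioo 0 t ×ˢ unitBox k) :=
    measurableSet_Ioo.prod (measurableSet_unitBox k)
  -- on `(0, t)` the kernel has positive time `t - s`, so the integrand is jointly measurable
  have hintegrand : AEStronglyMeasurable
      (fun p : ℝ × (Fin k → ℝ) => Φ p.1 p.2 * ∏ j, heatK (t - p.1) (x j) (p.2 j))
      ((volume.restrict (Ioo 0 t)).prod (volume.restrict (unitBox k))) := by
    rw [Measure.prod_restrict]
    refine ((hΦ.mono (prod_mono (Ioo_subset_Icc_self.trans (Icc_subset_Icc_right htT))
      subset_rfl)).aestronglyMeasurable hset).mul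
      (Finset.aestronglyMeasurable_fun_prod _ fun j _ => aestronglyMeasurable_heatK
        (by fun_prop) (by fun_prop) (by fun_prop)
        ((ae_restrict_mem hset).mono fun p hp => sub_pos.2 hp.1.2))
  rw [intervalIntegrable_iff_integrableOn_Ioc_of_le ht, integrableOn_Ioc_iff_integrableOn_Ioo]
  refine Integrable.mono' (integrable_const B) ?_
    ((ae_restrict_mem measurableSet_Ioo).mono hbound)
  refine hintegrand.integral_prod_right'.congr ((ae_restrict_mem measurableSet_Ioo).mono
    fun s hs => ?_)
  simp only [Ptk, if_neg (sub_ne_zero.2 hs.2.ne')]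

lemma snoc_self_mem_unitBox {k : ℕ} (i : Fin k) {z : Fin k → ℝ} (hz : z ∈ unitBox k) :
    (Fin.snoc z (z i) : Fin (k + 1) → ℝ) ∈ unitBox (k + 1) := by
  intro j _
  induction j using Fin.lastCases with
  | last => simpa using hz i (mem_univ i)
  | cast j => simpa using hz j (mem_univ j)

section TimeSlices

variable {k : ℕ} {T : ℝ}

lemma ContinuousOn.comp_snoc_self {ψ : ℝ → (Fin (k + 1) → ℝ) → ℝ}
    (hψ : ContinuousOn (fun q : ℝ × (Fin (k + 1) → ℝ) => ψ q.1 q.2) (Icc 0 T ×ˢ unitBox (k + 1)))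
    (i : Fin k) :
    ContinuousOn (fun q : ℝ × (Fin k → ℝ) => ψ q.1 (Fin.snoc q.2 (q.2 i)))
      (Icc 0 T ×ˢ unitBox k) :=
  hψ.comp (continuous_fst.prodMk
      (continuous_snd.finSnoc ((continuous_apply i).comp continuous_snd))).continuousOn
    fun _ hq => ⟨hq.1, snoc_self_mem_unitBox i hq.2⟩

lemma ContinuousOn.time_slice {Φ : ℝ → (Fin k → ℝ) → ℝ}
    (hΦ : ContinuousOn (fun q : ℝ × (Fin k → ℝ) => Φ q.1 q.2) (Icc 0 T ×ˢ unitBox k))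
    {s : ℝ} (hs : s ∈ Icc 0 T) : ContinuousOn (Φ s) (unitBox k) :=
  hΦ.comp (Continuous.prodMk_right s).continuousOn fun _ hz => ⟨hs, hz⟩

lemma abs_integral_Ptk_sub_le {Φ Ψ : ℝ → (Fin k → ℝ) → ℝ}
    (hΦ : ContinuousOn (fun q : ℝ × (Fin k → ℝ) => Φ q.1 q.2) (Icc 0 T ×ˢ unitBox k))
    (hΨ : ContinuousOn (fun q : ℝ × (Fin k → ℝ) => Ψ q.1 q.2) (Icc 0 T ×ˢ unitBox k))
    {t : ℝ} {g : ℝ → ℝ} (hg : IntervalIntegrable g volume 0 t)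
    (hgap : ∀ s ∈ Icc 0 t, ∀ z ∈ unitBox k, |Φ s z - Ψ s z| ≤ g s)
    (ht : 0 ≤ t) (htT : t ≤ T) {x : Fin k → ℝ} (hx : x ∈ unitBox k) :
    |(∫ s in (0:ℝ)..t, Ptk k (t - s) (Φ s) x) - ∫ s in (0:ℝ)..t, Ptk k (t - s) (Ψ s) x|
      ≤ ∫ s in (0:ℝ)..t, g s := by
  rw [← intervalIntegral.integral_sub (intervalIntegrable_Ptk hΦ ht htT hx)
    (intervalIntegrable_Ptk hΨ ht htT hx), ← Real.norm_eq_abs]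
  refine intervalIntegral.norm_integral_le_of_norm_le ht (ae_of_all _ fun s hs => ?_) hg
  have hsT : s ∈ Icc 0 T := ⟨hs.1.le, hs.2.trans htT⟩
  rw [Real.norm_eq_abs, Ptk_sub (sub_nonneg.2 hs.2) (hΦ.time_slice hsT) (hΨ.time_slice hsT)]
  exact abs_Ptk_le (sub_nonneg.2 hs.2) (hgap s (Ioc_subset_Icc_self hs)) hx

end TimeSlices

theorem SatisfiesLimitingHierarchy.abs_sub_le {T t : ℝ}
    {γ γ' : (k : ℕ) → ℝ → (Fin k → ℝ) → ℝ}
    (hγ : SatisfiesLimitingHierarchy T γ) (hγ' : SatisfiesLimitingHierarchy T γ')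
    {k : ℕ} (hk : 1 ≤ k) (h0 : γ k 0 = γ' k 0) {g : ℝ → ℝ}
    (hg : IntervalIntegrable g volume 0 t)
    (hgap : ∀ s ∈ Icc 0 t, ∀ z ∈ unitBox (k + 1), |γ (k + 1) s z - γ' (k + 1) s z| ≤ g s)
    (ht : t ∈ Icc 0 T) {x : Fin k → ℝ} (hx : x ∈ unitBox k) :
    |γ k t x - γ' k t x| ≤ k * ∫ s in (0:ℝ)..t, g s := by
  rw [hγ.2 k hk t ht x hx, hγ'.2 k hk t ht x hx, h0, sub_sub_sub_cancel_left, abs_sub_comm,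
    ← Finset.sum_sub_distrib]
  refine (Finset.abs_sum_le_sum_abs _ _).trans ((Finset.sum_le_sum fun i _ =>
    abs_integral_Ptk_sub_le ((hγ.1 (k + 1) (by omega)).comp_snoc_self i)
      ((hγ'.1 (k + 1) (by omega)).comp_snoc_self i) hg
      (fun s hs z hz => hgap s hs _ (snoc_self_mem_unitBox i hz)) ht.1 ht.2 hx).trans_eq ?_)
  simp

noncomputable def hierarchyBound (C : ℝ) (k M : ℕ) (t : ℝ) : ℝ :=
  2 * C ^ (k + M) * ((∏ j ∈ Finset.range M, ((k : ℝ) + j)) / (Nat.factorial M : ℝ)) * t ^ M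

lemma continuous_hierarchyBound (C : ℝ) (k M : ℕ) : Continuous (hierarchyBound C k M) := by
  unfold hierarchyBound; fun_prop

lemma mul_integral_hierarchyBound (C : ℝ) (k M : ℕ) (t : ℝ) :
    k * ∫ s in (0:ℝ)..t, hierarchyBound C (k + 1) M s = hierarchyBound C k (M + 1) t := by
  simp only [hierarchyBound, intervalIntegral.integral_const_mul, integral_pow,
    Finset.prod_range_succ', Nat.factorial_succ]
  push_cast
  field_simp
  ring_nf

/-- Gronwall-type iterated bound for two bounded solutions of the
limiting BBGKY hierarchy:
`|γ^(k)(t) − γ̃^(k)(t)| ≤ 2 C^{k+M} (k(k+1)⋯(k+M−1)/M!) t^M`. -/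
theorem limiting_hierarchy_iterated_bound :
    ∀ C : ℝ, 1 ≤ C → ∀ T > (0:ℝ),
      ∀ γ γ' : (k : ℕ) → ℝ → (Fin k → ℝ) → ℝ,
        SatisfiesLimitingHierarchy T γ → SatisfiesLimitingHierarchy T γ' →
        (∀ k : ℕ, 1 ≤ k → γ k 0 = γ' k 0) →
        (∀ k : ℕ, 1 ≤ k → ∀ t ∈ Set.Icc (0:ℝ) T, ∀ x ∈ unitBox k, |γ k t x| ≤ C ^ k) →
        (∀ k : ℕ, 1 ≤ k → ∀ t ∈ Set.Icc (0:ℝ) T, ∀ x ∈ unitBox k, |γ' k t x| ≤ C ^ k) →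
        ∀ k : ℕ, 1 ≤ k → ∀ M : ℕ, 1 ≤ M → ∀ t ∈ Set.Icc (0:ℝ) T, ∀ x ∈ unitBox k,
          |γ k t x - γ' k t x|
            ≤ 2 * C ^ (k + M)
                * ((∏ j ∈ Finset.range M, ((k : ℝ) + j)) / (Nat.factorial M : ℝ))
                * t ^ M := by
  rintro C - T - γ γ' hγ hγ' h0 hbγ hbγ' k hk M - t ht x hx
  change |γ k t x - γ' k t x| ≤ hierarchyBound C k M t
  induction M generalizing k t x with
  | zero =>
    calc |γ k t x - γ' k t x| ≤ |γ k t x| + |γ' k t x| := abs_sub _ _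
      _ ≤ C ^ k + C ^ k := add_le_add (hbγ k hk t ht x hx) (hbγ' k hk t ht x hx)
      _ = hierarchyBound C k 0 t := by simp [hierarchyBound]; ring
  | succ M ih =>
    rw [← mul_integral_hierarchyBound]
    exact hγ.abs_sub_le hγ' hk (h0 k hk)
      ((continuous_hierarchyBound C (k + 1) M).intervalIntegrable 0 t)
      (fun s hs z hz => ih (k + 1) (by omega) s ⟨hs.1, hs.2.trans ht.2⟩ z hz) ht hx
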